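/- arXiv:2504.17868 — 3 statements merged into one kernel-verified Lean document; each statement's English description precedes it below -/
import Mathlib

section
/- For every integer Δ ≥ 0, there exists a rooted tree T with a partial edge coloring such that: (a) for every leaf v of T there is a color c_v such that, after deleting all edges of color c_v, v is the only leaf that remains connected to the root; (b) every color appears on at most Δ edges; (c) T has exactly 2^Δ leaves; (d) T has exactly Δ·2^Δ edges. -/
/-- A finite rooted tree with a partial edge coloring: `col v` is the color (if any) of
the edge joining `v` to its parent, for `v ≠ root`. -/
structure RCTree (C : Type) where
  V : Type
  fin : Fintype V
  root : V
  parent : V → V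
  depth : V → ℕ
  col : V → Option C
  parent_root : parent root = root
  depth_root : depth root = 0
  depth_eq_zero : ∀ v, depth v = 0 → v = root
  depth_parent : ∀ v, v ≠ root → depth (parent v) + 1 = depth v

namespace RCTree

variable {C : Type} (T : RCTree C)

/-- A leaf: a vertex with no children. -/
def IsLeaf (v : T.V) : Prop := ∀ u : T.V, u ≠ T.root → T.parent u ≠ v

/-- `v` remains connected to the root after deleting all edges of color `c`:
no edge on the root-to-`v` path has color `c`. -/
def Survives (c : C) (v : T.V) : Prop :=
  ∀ k : ℕ, k < T.depth v → T.col (T.parent^[k] v) ≠ some c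

end RCTree

/-!
Leaves are labelled by `ℓ < 2 ^ Δ`, and the colour of leaf `ℓ` is `ℓ` itself. The path from the
root to a leaf descends through levels `Δ - 1, …, 0`; on level `e` it runs along a path of `2 ^ e`
edges shared by all leaves of the block `ℓ / 2 ^ e`, whose edges carry the `2 ^ e` colours of the
sibling block `(ℓ / 2 ^ e) ^^^ 1`. So the colour `ℓ` never occurs above leaf `ℓ`, while for
`ℓ' ≠ ℓ` it occurs above `ℓ'` on the level of the highest bit of `ℓ ^^^ ℓ'`. Each colour occurs
once per level, and every root-to-leaf path has length `2 ^ Δ - 1`, so a vertex on it is determined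
by its depth.
-/

namespace RCTree

variable {C : Type} (T : RCTree C)

theorem depth_iterate_parent (v : T.V) (j : ℕ) :
    T.depth (T.parent^[j] v) = T.depth v - j := by
  induction j with
  | zero => rfl
  | succ j ih =>
    rw [Function.iterate_succ_apply']
    by_cases hroot : T.parent^[j] v = T.root
    · rw [hroot, T.depth_root] at ih
      rw [hroot, T.parent_root, T.depth_root]
      omega
    · have := T.depth_parent _ hroot
      omega

end RCTree

namespace Nat

theorem add_one_mod_of_mod_add_one_lt {m a : ℕ} (h : m % a + 1 < a) :
    (m + 1) % a = m % a + 1 := by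
  conv_lhs => rw [← Nat.mod_add_div m a, Nat.add_right_comm, Nat.add_mul_mod_self_left]
  exact Nat.mod_eq_of_lt h

theorem add_one_div_of_mod_add_one_lt {m a : ℕ} (h : m % a + 1 < a) :
    (m + 1) / a = m / a := by
  conv_lhs => rw [← Nat.mod_add_div m a, Nat.add_right_comm,
    Nat.add_mul_div_left _ _ (by omega), Nat.div_eq_of_lt h, Nat.zero_add]

theorem add_one_lt_two_pow_of_mod_add_one_lt {m e n : ℕ} (he : e ≤ n) (hm : m < 2 ^ n)
    (h : m % 2 ^ e + 1 < 2 ^ e) : m + 1 < 2 ^ n := by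
  have hn : 2 ^ n = 2 ^ e * 2 ^ (n - e) := by rw [← pow_add, Nat.add_sub_cancel' he]
  have hdiv : m / 2 ^ e + 1 ≤ 2 ^ (n - e) := Nat.div_lt_of_lt_mul (hn ▸ hm)
  have := Nat.mod_add_div m (2 ^ e)
  have := Nat.mul_le_mul_left (2 ^ e) hdiv
  rw [Nat.mul_add_one] at this
  omega

theorem div_two_pow_eq_iff_testBit {a b e : ℕ} :
    a / 2 ^ e = b / 2 ^ e ↔ ∀ i, e ≤ i → a.testBit i = b.testBit i := by
  refine ⟨fun h i hi => ?_, fun h => Nat.eq_of_testBit_eq fun i => ?_⟩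
  · simpa [Nat.testBit_div_two_pow, Nat.sub_add_cancel hi] using congrArg (·.testBit (i - e)) h
  · simpa [Nat.testBit_div_two_pow] using h (i + e) (Nat.le_add_left e i)

theorem xor_two_pow_ne_of_div_two_pow_eq {m ℓ e : ℕ} (h : m / 2 ^ e = ℓ / 2 ^ e) :
    m ^^^ 2 ^ e ≠ ℓ := by
  intro heq
  have := div_two_pow_eq_iff_testBit.1 h e le_rfl
  rw [← heq] at this
  simp [Nat.testBit_two_pow_self] at this

theorem exists_xor_two_pow_div_eq {ℓ ℓ' : ℕ} (h : ℓ ≠ ℓ') :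
    ∃ e, 2 ^ e ≤ ℓ ^^^ ℓ' ∧ (ℓ ^^^ 2 ^ e) / 2 ^ e = ℓ' / 2 ^ e := by
  obtain ⟨e, hbit, hhigh⟩ := Nat.exists_most_significant_bit (mt xor_eq_zero_iff.1 h)
  refine ⟨e, Nat.ge_two_pow_of_testBit hbit, div_two_pow_eq_iff_testBit.2 fun i hi => ?_⟩
  rcases hi.eq_or_lt with rfl | hlt
  · grind [Nat.testBit_two_pow_self]
  · grind [hhigh i hlt]

theorem eq_of_two_pow_sub_two_pow_sub_eq {n e e' r r' : ℕ} (he : e < n) (he' : e' < n)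
    (hr : r < 2 ^ e) (hr' : r' < 2 ^ e') (h : 2 ^ n - 2 ^ e - r = 2 ^ n - 2 ^ e' - r') :
    e = e' ∧ r = r' := by
  have hlt : ∀ {a b}, a < b → 2 * 2 ^ a ≤ 2 ^ b := fun hab => by
    rw [← pow_succ']; exact Nat.pow_le_pow_right two_pos hab
  have := hlt he
  have := hlt he'
  rcases lt_trichotomy e e' with hee | rfl | hee
  · have := hlt hee; omega
  · exact ⟨rfl, by omega⟩
  · have := hlt hee; omega

end Nat

namespace BinaryGadget

variable {Δ : ℕ}

/-- The non-root vertex `(e, m)` lies on level `e` (leaves on level `0`), on the path of `2 ^ e`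
edges shared by the leaves `ℓ` with `ℓ / 2 ^ e = m / 2 ^ e`, at height `m % 2 ^ e` above the
bottom of that path. -/
abbrev Vertex (Δ : ℕ) := Option (Fin Δ × Fin (2 ^ Δ))

def parent : Vertex Δ → Vertex Δ
  | none => none
  | some (e, m) =>
    if h : (m : ℕ) % 2 ^ (e : ℕ) + 1 < 2 ^ (e : ℕ) then
      some (e, ⟨m + 1, Nat.add_one_lt_two_pow_of_mod_add_one_lt e.isLt.le m.isLt h⟩)
    else if he : (e : ℕ) + 1 < Δ then
      some (⟨e + 1, he⟩,
        ⟨m / 2 ^ ((e : ℕ) + 1) * 2 ^ ((e : ℕ) + 1), (Nat.div_mul_le_self _ _).trans_lt m.isLt⟩)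
    else none

/-- Levels `Δ - 1, …, e + 1` contribute `2 ^ Δ - 2 ^ (e + 1)` edges to the depth. -/
def depth : Vertex Δ → ℕ
  | none => 0
  | some (e, m) => 2 ^ Δ - 2 ^ (e : ℕ) - m % 2 ^ (e : ℕ)

/-- The edges of a level-`e` path are coloured by the leaves of the sibling block. -/
def col : Vertex Δ → Option ℕ
  | none => none
  | some (e, m) => some ((m : ℕ) ^^^ 2 ^ (e : ℕ))

/-- Shown below to mean that `x` is on the root-to-leaf path of `leaf ℓ`. -/
def LiesAbove (ℓ : ℕ) : Vertex Δ → Prop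
  | none => True
  | some (e, m) => (m : ℕ) / 2 ^ (e : ℕ) = ℓ / 2 ^ (e : ℕ)

def leaf (ℓ : Fin (2 ^ Δ)) : Vertex Δ :=
  if h : 0 < Δ then some (⟨0, h⟩, ℓ) else none

theorem two_mul_two_pow_le (e : Fin Δ) : 2 * 2 ^ (e : ℕ) ≤ 2 ^ Δ := by
  rw [← pow_succ']
  exact Nat.pow_le_pow_right two_pos e.isLt

theorem depth_some_pos (e : Fin Δ) (m : Fin (2 ^ Δ)) : 0 < depth (some (e, m)) := by
  have := two_mul_two_pow_le e
  have := Nat.mod_lt (m : ℕ) (Nat.two_pow_pos (e : ℕ))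
  simp only [depth]
  omega

theorem depth_le (x : Vertex Δ) : depth x ≤ 2 ^ Δ - 1 := by
  rcases x with _ | ⟨e, m⟩
  · exact Nat.zero_le _
  · have := Nat.one_le_two_pow (n := (e : ℕ))
    simp only [depth]
    omega

theorem depth_parent (e : Fin Δ) (m : Fin (2 ^ Δ)) :
    depth (parent (some (e, m))) + 1 = depth (some (e, m)) := by
  have hle := two_mul_two_pow_le e
  have hmod := Nat.mod_lt (m : ℕ) (Nat.two_pow_pos (e : ℕ))
  simp only [parent]
  split_ifs with h he
  · simp only [depth, Nat.add_one_mod_of_mod_add_one_lt h]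
    omega
  · simp only [depth, Nat.mul_mod_left, pow_succ]
    omega
  · have : 2 ^ Δ = 2 * 2 ^ (e : ℕ) := by
      rw [← pow_succ']; congr 1; have := e.isLt; omega
    simp only [depth]
    omega

theorem liesAbove_parent {ℓ : ℕ} {x : Vertex Δ} (hx : LiesAbove ℓ x) : LiesAbove ℓ (parent x) := by
  rcases x with _ | ⟨e, m⟩
  · trivial
  · simp only [LiesAbove] at hx
    simp only [parent]
    split_ifs with h he
    · simpa [LiesAbove, Nat.add_one_div_of_mod_add_one_lt h] using hx
    · show m / 2 ^ ((e : ℕ) + 1) * 2 ^ ((e : ℕ) + 1) / 2 ^ ((e : ℕ) + 1) = ℓ / 2 ^ ((e : ℕ) + 1)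
      rw [Nat.mul_div_cancel _ (Nat.two_pow_pos _), pow_succ, ← Nat.div_div_eq_div_mul,
        ← Nat.div_div_eq_div_mul, hx]
    · trivial

theorem liesAbove_iterate_parent {ℓ : ℕ} {x : Vertex Δ} (hx : LiesAbove ℓ x) (j : ℕ) :
    LiesAbove ℓ (parent^[j] x) := by
  induction j with
  | zero => exact hx
  | succ j ih => rw [Function.iterate_succ_apply']; exact liesAbove_parent ih

theorem eq_of_liesAbove_of_depth_eq {ℓ : ℕ} {x y : Vertex Δ} (hx : LiesAbove ℓ x)
    (hy : LiesAbove ℓ y) (h : depth x = depth y) : x = y := by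
  rcases x with _ | ⟨e, m⟩ <;> rcases y with _ | ⟨e', m'⟩
  · rfl
  · exact absurd h (depth_some_pos e' m').ne
  · exact absurd h (depth_some_pos e m).ne'
  · obtain ⟨he, hmod⟩ := Nat.eq_of_two_pow_sub_two_pow_sub_eq e.isLt e'.isLt
      (Nat.mod_lt _ (Nat.two_pow_pos _)) (Nat.mod_lt _ (Nat.two_pow_pos _)) h
    obtain rfl := Fin.ext he
    simp only [LiesAbove] at hx hy
    congr
    rw [Fin.ext_iff, ← Nat.div_add_mod (m : ℕ), ← Nat.div_add_mod (m' : ℕ), hx, hy, hmod]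

theorem liesAbove_leaf (ℓ : Fin (2 ^ Δ)) : LiesAbove ℓ (leaf ℓ) := by
  unfold leaf; split_ifs <;> simp [LiesAbove]

theorem depth_leaf (ℓ : Fin (2 ^ Δ)) : depth (leaf ℓ) = 2 ^ Δ - 1 := by
  unfold leaf; split_ifs with h
  · simp [depth, Nat.mod_one]
  · simp [depth, Nat.eq_zero_of_not_pos h]

theorem leaf_injective : Function.Injective (leaf : Fin (2 ^ Δ) → Vertex Δ) := by
  intro ℓ ℓ' h
  unfold leaf at h
  split_ifs at h with hΔ
  · simpa using h
  · obtain rfl := Nat.eq_zero_of_not_pos hΔ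
    exact Fin.ext (by have := ℓ.isLt; have := ℓ'.isLt; simp_all)

theorem exists_liesAbove (x : Vertex Δ) : ∃ ℓ : Fin (2 ^ Δ), LiesAbove ℓ x := by
  rcases x with _ | ⟨e, m⟩
  · exact ⟨⟨0, Nat.two_pow_pos Δ⟩, trivial⟩
  · exact ⟨m, rfl⟩

theorem col_ne_of_liesAbove {ℓ : ℕ} {x : Vertex Δ} (hx : LiesAbove ℓ x) : col x ≠ some ℓ := by
  rcases x with _ | ⟨e, m⟩
  · simp [col]
  · simpa [col] using Nat.xor_two_pow_ne_of_div_two_pow_eq hx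

theorem exists_liesAbove_col_eq {ℓ ℓ' : Fin (2 ^ Δ)} (h : ℓ ≠ ℓ') :
    ∃ e m, LiesAbove ℓ' (some (e, m) : Vertex Δ) ∧ col (some (e, m) : Vertex Δ) = some ℓ := by
  obtain ⟨e, hle, hdiv⟩ := Nat.exists_xor_two_pow_div_eq (Fin.val_injective.ne h)
  have hlt : 2 ^ e < 2 ^ Δ := hle.trans_lt (Nat.xor_lt_two_pow ℓ.isLt ℓ'.isLt)
  have he : e < Δ := (Nat.pow_lt_pow_iff_right (by norm_num)).1 hlt
  exact ⟨⟨e, he⟩, ⟨ℓ ^^^ 2 ^ e, Nat.xor_lt_two_pow ℓ.isLt hlt⟩, hdiv, by simp [col]⟩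

variable (Δ) in
abbrev gadget : RCTree ℕ where
  V := Vertex Δ
  fin := inferInstance
  root := none
  parent := parent
  depth := depth
  col := col
  parent_root := rfl
  depth_root := rfl
  depth_eq_zero
    | none, _ => rfl
    | some (e, m), h => absurd h (depth_some_pos e m).ne'
  depth_parent
    | none, h => absurd rfl h
    | some (e, m), _ => depth_parent e m

theorem depth_iterate_parent (x : Vertex Δ) (j : ℕ) : depth (parent^[j] x) = depth x - j :=
  (gadget Δ).depth_iterate_parent x j

theorem eq_iterate_parent_leaf {ℓ : Fin (2 ^ Δ)} {x : Vertex Δ} (hx : LiesAbove ℓ x) :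
    x = parent^[2 ^ Δ - 1 - depth x] (leaf ℓ) := by
  refine eq_of_liesAbove_of_depth_eq hx (liesAbove_iterate_parent (liesAbove_leaf ℓ) _) ?_
  rw [depth_iterate_parent, depth_leaf]
  have := depth_le x
  omega

theorem isLeaf_iff_depth_eq {x : Vertex Δ} : (gadget Δ).IsLeaf x ↔ depth x = 2 ^ Δ - 1 := by
  change (∀ u : Vertex Δ, u ≠ none → parent u ≠ x) ↔ _
  refine ⟨fun hleaf => ?_, fun hx u hu hux => ?_⟩
  · by_contra hlt
    have := depth_le x
    obtain ⟨ℓ, hℓ⟩ := exists_liesAbove x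
    set u := parent^[2 ^ Δ - 2 - depth x] (leaf ℓ)
    have hu : depth u = depth x + 1 := by
      rw [depth_iterate_parent, depth_leaf]
      omega
    refine hleaf u (fun h => by simp [h, depth] at hu) ?_
    rw [eq_iterate_parent_leaf hℓ, show 2 ^ Δ - 1 - depth x = (2 ^ Δ - 2 - depth x) + 1 by omega,
      Function.iterate_succ_apply']
  · obtain ⟨⟨e, m⟩, rfl⟩ := Option.ne_none_iff_exists'.1 hu
    have hdepth := depth_parent e m
    rw [hux] at hdepth
    have := depth_le (some (e, m))
    omega

theorem setOf_isLeaf_eq_range : {x | (gadget Δ).IsLeaf x} = Set.range leaf := by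
  ext x
  rw [Set.mem_ofPred_eq, isLeaf_iff_depth_eq, Set.mem_range]
  refine ⟨fun hx => ?_, ?_⟩
  · obtain ⟨ℓ, hℓ⟩ := exists_liesAbove x
    exact ⟨ℓ, eq_of_liesAbove_of_depth_eq (liesAbove_leaf ℓ) hℓ (by rw [depth_leaf, hx])⟩
  · rintro ⟨ℓ, rfl⟩
    exact depth_leaf ℓ

theorem survives_leaf (ℓ : Fin (2 ^ Δ)) : (gadget Δ).Survives ℓ (leaf ℓ) :=
  fun j _ => col_ne_of_liesAbove (liesAbove_iterate_parent (liesAbove_leaf ℓ) j)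

theorem not_survives_leaf {ℓ ℓ' : Fin (2 ^ Δ)} (h : ℓ ≠ ℓ') :
    ¬ (gadget Δ).Survives ℓ (leaf ℓ') := by
  obtain ⟨e, m, hlies, hcol⟩ := exists_liesAbove_col_eq h
  intro hsurv
  refine hsurv _ ?_ (eq_iterate_parent_leaf hlies ▸ hcol)
  have := depth_some_pos e m
  change _ < depth (leaf ℓ')
  rw [depth_leaf]
  omega

theorem ncard_col_eq_le (c : ℕ) : {x : Vertex Δ | x ≠ none ∧ col x = some c}.ncard ≤ Δ := by
  calc _ ≤ (Set.range (some : Fin Δ → Option (Fin Δ))).ncard := by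
        refine Set.ncard_le_ncard_of_injOn (Option.map Prod.fst) ?_ ?_ (Set.toFinite _)
        · rintro x ⟨hx, -⟩
          obtain ⟨⟨e, m⟩, rfl⟩ := Option.ne_none_iff_exists'.1 hx
          exact ⟨e, rfl⟩
        · rintro x ⟨hx, hcx⟩ y ⟨hy, hcy⟩ hxy
          obtain ⟨⟨e, m⟩, rfl⟩ := Option.ne_none_iff_exists'.1 hx
          obtain ⟨⟨e', m'⟩, rfl⟩ := Option.ne_none_iff_exists'.1 hy
          obtain rfl : e = e' := by simpa using hxy
          simp only [col, Option.some.injEq] at hcx hcy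
          rw [Fin.ext ((xor_left_involutive _).injective (hcx.trans hcy.symm))]
    _ = Δ := by rw [Set.ncard_range_of_injective (Option.some_injective _), Nat.card_fin]

theorem ncard_ne_none : {x : Vertex Δ | x ≠ none}.ncard = Δ * 2 ^ Δ := by
  have : {x : Vertex Δ | x ≠ none} = Set.range some := by
    ext x
    exact Option.ne_none_iff_exists'.trans (by simp [eq_comm])
  rw [this, Set.ncard_range_of_injective (Option.some_injective _), Nat.card_prod, Nat.card_fin,
    Nat.card_fin]

end BinaryGadget

/-- for every `Δ ≥ 0` there is a rooted, partially edge-colored tree such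
that: (a) for each leaf `v` there is a color `c_v` whose deletion disconnects every leaf
except `v` from the root; (b) each color appears on at most `Δ` edges; (c) there are
exactly `2^Δ` leaves; (d) there are exactly `Δ·2^Δ` edges. -/
theorem exists_binary_lower_bound_tree (Δ : ℕ) :
    ∃ (C : Type) (T : RCTree C),
      (∀ v : T.V, T.IsLeaf v → ∃ c : C,
        T.Survives c v ∧
        ∀ v' : T.V, T.IsLeaf v' → T.Survives c v' → v' = v) ∧
      (∀ c : C, {v : T.V | v ≠ T.root ∧ T.col v = some c}.ncard ≤ Δ) ∧
      {v : T.V | T.IsLeaf v}.ncard = 2 ^ Δ ∧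
      {v : T.V | v ≠ T.root}.ncard = Δ * 2 ^ Δ := by
  refine ⟨ℕ, BinaryGadget.gadget Δ, fun v hv => ?_, BinaryGadget.ncard_col_eq_le,
    ?_, BinaryGadget.ncard_ne_none⟩
  · obtain ⟨ℓ, rfl⟩ : v ∈ Set.range BinaryGadget.leaf := BinaryGadget.setOf_isLeaf_eq_range ▸ hv
    refine ⟨ℓ, BinaryGadget.survives_leaf ℓ, fun v' hv' hsurv => ?_⟩
    obtain ⟨ℓ', rfl⟩ : v' ∈ Set.range BinaryGadget.leaf :=
      BinaryGadget.setOf_isLeaf_eq_range ▸ hv'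
    by_contra hne
    exact BinaryGadget.not_survives_leaf (fun h => hne (congrArg _ h.symm)) hsurv
  · rw [BinaryGadget.setOf_isLeaf_eq_range,
      Set.ncard_range_of_injective BinaryGadget.leaf_injective, Nat.card_fin]
end

section
/- Canonical order existence: Let G be a graph, s, t vertices, and for every edge set F' fix a shortest s–t path π(s,t | F') in G−F' with stable tiebreaking (if e ∉ π(s,t|F') then π(s,t | F' ∪ {e}) = π(s,t|F')). Suppose F is a minimal fault set for (s,t), meaning π(s,t | F') ≠ π(s,t | F) for every proper subset F' ⊊ F. Then there is an ordering e_1, …, e_{|F|} of F such that for every 1 ≤ i ≤ |F|, the edge e_i lies on the path π(s,t | {e_1, …, e_{i−1}}). -/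
/-- `IsWalkFrom a l b`: the list of edges `l` forms a walk from `a` to `b`. -/
def IsWalkFrom {V : Type*} : V → List (V × V) → V → Prop
  | a, [], b => a = b
  | a, e :: l, b => e.1 = a ∧ IsWalkFrom e.2 l b

/-!
Let `e₁` be an edge of `F` on `π ∅`; one exists, since otherwise stability would give
`π F = π ∅`. Faulting `e₁` for good, `F' ↦ π (insert e₁ F')` is again a stable choice of
paths and `F \ {e₁}` is minimal for it, so by induction it has a canonical order
`e₂, …, e_k`, and `e₁, e₂, …, e_k` is a canonical order of `F`.
-/

namespace FaultTolerantPath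

variable {α : Type*} [DecidableEq α]

def IsStable (π : Finset α → List α) : Prop :=
  ∀ (F : Finset α) (e : α), e ∉ π F → π (insert e F) = π F

def IsMinimalFaultSet (π : Finset α → List α) (F : Finset α) : Prop :=
  ∀ F' ⊂ F, π F' ≠ π F

def IsCanonicalOrder (π : Finset α → List α) (L : List α) : Prop :=
  ∀ (i : ℕ) (h : i < L.length), L[i] ∈ π (L.take i).toFinset

def faultInsert (π : Finset α → List α) (e : α) : Finset α → List α :=
  fun F => π (insert e F)

theorem IsStable.faultInsert {π : Finset α → List α} (hπ : IsStable π) (e : α) :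
    IsStable (faultInsert π e) := by
  intro F a ha
  simp only [FaultTolerantPath.faultInsert, Finset.insert_comm e a] at ha ⊢
  exact hπ _ a ha

theorem IsStable.apply_eq_apply_empty {π : Finset α → List α} (hπ : IsStable π)
    {F : Finset α} (hF : ∀ e ∈ F, e ∉ π ∅) : π F = π ∅ := by
  induction F using Finset.induction_on with
  | empty => rfl
  | insert a F _ ih =>
    have hF' : π F = π ∅ := ih fun e he => hF e (Finset.mem_insert_of_mem he)
    rw [hπ F a (hF' ▸ hF a (Finset.mem_insert_self a F)), hF']

theorem IsMinimalFaultSet.exists_mem_apply_empty {π : Finset α → List α} {F : Finset α}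
    (hπ : IsStable π) (hF : IsMinimalFaultSet π F) (hne : F.Nonempty) :
    ∃ e ∈ F, e ∈ π ∅ := by
  by_contra! hnot
  exact hF ∅ (Finset.empty_ssubset.mpr hne) (hπ.apply_eq_apply_empty hnot).symm

theorem IsMinimalFaultSet.faultInsert_erase {π : Finset α → List α} {F : Finset α}
    (hF : IsMinimalFaultSet π F) {e : α} (he : e ∈ F) :
    IsMinimalFaultSet (faultInsert π e) (F.erase e) := by
  intro F' hF'
  have hsub : insert e F' ⊂ F := by grind
  simpa only [FaultTolerantPath.faultInsert, Finset.insert_erase he] using hF _ hsub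

theorem isCanonicalOrder_cons {π : Finset α → List α} {e : α} {L : List α} :
    IsCanonicalOrder π (e :: L) ↔ e ∈ π ∅ ∧ IsCanonicalOrder (faultInsert π e) L := by
  constructor
  · intro h
    refine ⟨h 0 (by simp), fun i hi => ?_⟩
    simpa [FaultTolerantPath.faultInsert] using (h (i + 1) (Nat.succ_lt_succ hi) : L[i] ∈ _)
  · rintro ⟨he, hL⟩ (_ | i) hi
    · exact he
    · simpa [FaultTolerantPath.faultInsert] using hL i (by simpa using hi)

theorem IsMinimalFaultSet.exists_isCanonicalOrder {π : Finset α → List α} {F : Finset α}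
    (hπ : IsStable π) (hF : IsMinimalFaultSet π F) :
    ∃ L : List α, L.Nodup ∧ L.toFinset = F ∧ IsCanonicalOrder π L := by
  induction F using Finset.strongInduction generalizing π with
  | H F ih =>
    rcases F.eq_empty_or_nonempty with rfl | hne
    · exact ⟨[], List.nodup_nil, rfl, nofun⟩
    obtain ⟨e, heF, heπ⟩ := hF.exists_mem_apply_empty hπ hne
    obtain ⟨L, hnodup, hLF, hL⟩ := ih (F.erase e) (Finset.erase_ssubset heF)
      (hπ.faultInsert e) (hF.faultInsert_erase heF)
    have heL : e ∉ L := fun h => Finset.notMem_erase e F (hLF ▸ List.mem_toFinset.mpr h)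
    refine ⟨e :: L, List.nodup_cons.mpr ⟨heL, hnodup⟩, ?_, isCanonicalOrder_cons.mpr ⟨heπ, hL⟩⟩
    rw [List.toFinset_cons, hLF, Finset.insert_erase heF]

end FaultTolerantPath

open FaultTolerantPath in
theorem canonical_order_exists_general {V : Type*} [DecidableEq V]
    (π : Finset (V × V) → List (V × V))
    (hstable : ∀ (F : Finset (V × V)) (e : V × V), e ∉ π F → π (insert e F) = π F)
    (F : Finset (V × V))
    (hmin : ∀ F' : Finset (V × V), F' ⊂ F → π F' ≠ π F) :
    ∃ L : List (V × V), L.Nodup ∧ L.toFinset = F ∧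
      ∀ (i : ℕ) (h : i < L.length), L.get ⟨i, h⟩ ∈ π (L.take i).toFinset :=
  IsMinimalFaultSet.exists_isCanonicalOrder (π := π) hstable hmin

/-- canonical order existence: if `π F'` is a chosen shortest `s`–`t`
path in `G − F'` with stable tiebreaking, and `F` is minimal (no proper subset yields
the same chosen path), then `F` can be ordered `e_1, …, e_{|F|}` so that each `e_i` lies
on `π {e_1, …, e_{i−1}}`. -/
theorem canonical_order_exists {V : Type*} [DecidableEq V]
    (G : Set (V × V)) (s t : V)
    (π : Finset (V × V) → List (V × V))
    (hwalk : ∀ F : Finset (V × V), IsWalkFrom s (π F) t ∧ ∀ e ∈ π F, e ∈ G ∧ e ∉ F)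
    (hshort : ∀ (F : Finset (V × V)) (l : List (V × V)),
      IsWalkFrom s l t → (∀ e ∈ l, e ∈ G ∧ e ∉ F) → (π F).length ≤ l.length)
    (hstable : ∀ (F : Finset (V × V)) (e : V × V), e ∉ π F → π (insert e F) = π F)
    (F : Finset (V × V))
    (hmin : ∀ F' : Finset (V × V), F' ⊂ F → π F' ≠ π F) :
    ∃ L : List (V × V), L.Nodup ∧ L.toFinset = F ∧
      ∀ (i : ℕ) (h : i < L.length), L.get ⟨i, h⟩ ∈ π (L.take i).toFinset :=
  canonical_order_exists_general π hstable F hmin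
end

section
/- Unique shortest path forcing: Let T be an edge-colored tree rooted at s with leaf set X, such that for a leaf x and color c_x, x is the unique leaf of minimal depth among leaves connected to s in T − c_x. Let G be obtained from T by adding a disjoint vertex set Y and all uncolored edges between X and Y. Then for every y ∈ Y, every shortest s–y path in G − c_x passes through x and uses the edge (x,y); consequently any subgraph H ⊆ G with dist_H(s,y | c_x) = dist_G(s,y | c_x) must contain the edge (x,y). -/
namespace RCTree

variable {C : Type} (T : RCTree C)

/-- The (undirected) edges of the graph `G` obtained from `T` by adding a vertex set `Y`
and all edges between the leaves of `T` and `Y`. -/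
def gEdge (Y : Type) : Set ((T.V ⊕ Y) × (T.V ⊕ Y)) :=
  {p | (∃ u v : T.V,
          ((p.1 = Sum.inl u ∧ p.2 = Sum.inl v) ∨ (p.1 = Sum.inl v ∧ p.2 = Sum.inl u)) ∧
          T.parent v = u ∧ v ≠ T.root) ∨
       (∃ (u : T.V) (y : Y), T.IsLeaf u ∧
          ((p.1 = Sum.inl u ∧ p.2 = Sum.inr y) ∨ (p.1 = Sum.inr y ∧ p.2 = Sum.inl u)))}

/-- The edge `p` of `G` carries color `c` (only tree edges are colored). -/
def HasColor (Y : Type) (c : C) (p : (T.V ⊕ Y) × (T.V ⊕ Y)) : Prop :=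
  ∃ u v : T.V,
    ((p.1 = Sum.inl u ∧ p.2 = Sum.inl v) ∨ (p.1 = Sum.inl v ∧ p.2 = Sum.inl u)) ∧
    T.parent v = u ∧ v ≠ T.root ∧ T.col v = some c

end RCTree

/-- Shortest-walk distance (number of edges) using only edges from `E`. -/
noncomputable def walkDist {V : Type*} (E : Set (V × V)) (a b : V) : ℕ∞ :=
  sInf {n : ℕ∞ | ∃ l : List (V × V),
    IsWalkFrom a l b ∧ (∀ e ∈ l, e ∈ E) ∧ n = (l.length : ℕ∞)}

section WalkDist

variable {V : Type*} {E : Set (V × V)} {a b c : V} {l : List (V × V)}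

theorem IsWalkFrom.append {l' : List (V × V)} (h : IsWalkFrom a l b) (h' : IsWalkFrom b l' c) :
    IsWalkFrom a (l ++ l') c := by
  induction l generalizing a with
  | nil => cases h; exact h'
  | cons e t ih => exact ⟨h.1, ih h.2⟩

theorem IsWalkFrom.ne_nil (h : IsWalkFrom a l b) (hab : a ≠ b) : l ≠ [] := by
  rintro rfl
  exact hab h

theorem walkDist_le (hw : IsWalkFrom a l b) (hE : ∀ e ∈ l, e ∈ E) :
    walkDist E a b ≤ l.length :=
  sInf_le ⟨l, hw, hE, rfl⟩

theorem le_walkDist {n : ℕ∞}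
    (h : ∀ l : List (V × V), IsWalkFrom a l b → (∀ e ∈ l, e ∈ E) → n ≤ l.length) :
    n ≤ walkDist E a b :=
  le_sInf fun _ ⟨l, hw, hE, hn⟩ => hn ▸ h l hw hE

theorem exists_walk_length_eq_walkDist (h : walkDist E a b ≠ ⊤) :
    ∃ l : List (V × V), IsWalkFrom a l b ∧ (∀ e ∈ l, e ∈ E) ∧ (l.length : ℕ∞) = walkDist E a b := by
  have hne : {n : ℕ∞ | ∃ l : List (V × V),
      IsWalkFrom a l b ∧ (∀ e ∈ l, e ∈ E) ∧ n = (l.length : ℕ∞)}.Nonempty := by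
    by_contra hempty
    exact h (by rw [walkDist, Set.not_nonempty_iff_eq_empty.mp hempty, sInf_empty])
  obtain ⟨l, hw, hE, hl⟩ := csInf_mem hne
  exact ⟨l, hw, hE, hl.symm⟩

end WalkDist

namespace RCTree

variable {C : Type} {T : RCTree C} {Y : Type} {c : C} {v w : T.V}

theorem survives_root (c : C) : T.Survives c T.root := by
  intro k hk
  rw [T.depth_root] at hk
  omega

theorem Survives.parent (hv : T.Survives c v) (hr : v ≠ T.root) : T.Survives c (T.parent v) := by
  intro k hk
  have h := hv (k + 1) (by have := T.depth_parent v hr; omega)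
  rwa [Function.iterate_succ_apply] at h

theorem Survives.of_parent (hv : T.Survives c (T.parent v)) (hr : v ≠ T.root)
    (hc : T.col v ≠ some c) : T.Survives c v := by
  rintro (_ | k) hk
  · exact hc
  · rw [Function.iterate_succ_apply]
    exact hv k (by have := T.depth_parent v hr; omega)

theorem depth_le_of_mem_gEdge (he : (Sum.inl v, Sum.inl w) ∈ T.gEdge Y) :
    T.depth w ≤ T.depth v + 1 := by
  rcases he with ⟨u, u', ⟨h1, h2⟩ | ⟨h1, h2⟩, hp, hr⟩ | ⟨_, _, _, ⟨_, h⟩ | ⟨h, _⟩⟩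
  · cases h1; cases h2; subst hp
    have := T.depth_parent w hr
    omega
  · cases h1; cases h2; subst hp
    have := T.depth_parent v hr
    omega
  all_goals cases h

theorem Survives.of_mem_gEdge (hv : T.Survives c v) (he : (Sum.inl v, Sum.inl w) ∈ T.gEdge Y)
    (hc : ¬ T.HasColor Y c (Sum.inl v, Sum.inl w)) : T.Survives c w := by
  rcases he with ⟨u, u', hor, hp, hr⟩ | ⟨_, _, _, ⟨_, h⟩ | ⟨h, _⟩⟩
  · rcases hor with ⟨h1, h2⟩ | ⟨h1, h2⟩
    · cases h1; cases h2
      exact (hp ▸ hv).of_parent hr fun hcol => hc ⟨v, w, Or.inl ⟨rfl, rfl⟩, hp, hr, hcol⟩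
    · cases h1; cases h2
      exact hp ▸ hv.parent hr
  all_goals cases h

theorem isLeaf_of_mem_gEdge {y : Y} (he : (Sum.inl v, Sum.inr y) ∈ T.gEdge Y) : T.IsLeaf v := by
  rcases he with ⟨_, _, ⟨_, h⟩ | ⟨_, h⟩, _⟩ | ⟨u, _, hu, ⟨h, _⟩ | ⟨h, _⟩⟩
  · cases h
  · cases h
  · cases h; exact hu
  · cases h

theorem not_mem_gEdge_inr_inr {y y' : Y} : (Sum.inr y, Sum.inr y') ∉ T.gEdge Y := by
  rintro (⟨_, _, ⟨h, _⟩ | ⟨h, _⟩, _⟩ | ⟨_, _, _, ⟨h, _⟩ | ⟨_, h⟩⟩) <;> cases h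

theorem not_hasColor_inl_inr {y : Y} : ¬ T.HasColor Y c (Sum.inl v, Sum.inr y) := by
  rintro ⟨_, _, ⟨_, h⟩ | ⟨_, h⟩, _⟩ <;> cases h

theorem exists_walk_of_survives (hv : T.Survives c v) :
    ∃ l : List ((T.V ⊕ Y) × (T.V ⊕ Y)), IsWalkFrom (Sum.inl T.root) l (Sum.inl v) ∧
      (∀ e ∈ l, e ∈ {e ∈ T.gEdge Y | ¬ T.HasColor Y c e}) ∧ l.length = T.depth v := by
  induction hd : T.depth v generalizing v with
  | zero => exact ⟨[], congrArg Sum.inl (T.depth_eq_zero v hd).symm, by simp, rfl⟩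
  | succ n ih =>
    have hr : v ≠ T.root := by rintro rfl; simp [T.depth_root] at hd
    have hdp := T.depth_parent v hr
    obtain ⟨l, hw, hE, hl⟩ := ih (hv.parent hr) (by omega)
    refine ⟨l ++ [(Sum.inl (T.parent v), Sum.inl v)], hw.append ⟨rfl, rfl⟩, ?_, by simp [hl]⟩
    simp only [List.mem_append, List.mem_singleton]
    rintro e (he | rfl)
    · exact hE e he
    refine ⟨Or.inl ⟨_, v, Or.inl ⟨rfl, rfl⟩, rfl, hr⟩, ?_⟩
    rintro ⟨u, u', ⟨h1, h2⟩ | ⟨h1, h2⟩, hp, hr', hcol⟩ <;> cases h1 <;> cases h2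
    · exact hv 0 (by omega) hcol
    · have := T.depth_parent _ hr'
      rw [hp] at this
      omega

theorem depth_add_one_le_of_walk {x : T.V} {y : Y} {l : List ((T.V ⊕ Y) × (T.V ⊕ Y))}
    (hxmin : ∀ v : T.V, T.IsLeaf v → v ≠ x → T.Survives c v → T.depth x < T.depth v)
    (hv : T.Survives c v) (hw : IsWalkFrom (Sum.inl v) l (Sum.inr y))
    (hE : ∀ e ∈ l, e ∈ {e ∈ T.gEdge Y | ¬ T.HasColor Y c e}) :
    T.depth x + 1 ≤ l.length + T.depth v ∧
      (l.length + T.depth v = T.depth x + 1 → ∃ p, l = p ++ [(Sum.inl x, Sum.inr y)]) := by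
  induction l generalizing v with
  | nil => cases hw
  | cons e l ih =>
    obtain ⟨a, b⟩ := e
    obtain ⟨rfl : a = Sum.inl v, hw⟩ := hw
    obtain ⟨heG, hec⟩ := hE _ List.mem_cons_self
    have hE' := fun e he => hE e (List.mem_cons_of_mem _ he)
    rcases b with w | y'
    · obtain ⟨hle, heq⟩ := ih (hv.of_mem_gEdge heG hec) hw hE'
      have := depth_le_of_mem_gEdge heG
      refine ⟨by simp only [List.length_cons]; omega, fun hlen => ?_⟩
      obtain ⟨p, rfl⟩ := heq (by simp only [List.length_cons] at hlen; omega)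
      exact ⟨_ :: p, rfl⟩
    have hvleaf := isLeaf_of_mem_gEdge heG
    have hxv : T.depth x ≤ T.depth v := by
      by_cases hvx : v = x
      · rw [hvx]
      · exact (hxmin v hvleaf hvx hv).le
    rcases l with _ | ⟨⟨a', b'⟩, l⟩
    · cases hw
      refine ⟨by simp only [List.length_cons, List.length_nil]; omega, fun hlen => ⟨[], ?_⟩⟩
      simp only [List.length_cons, List.length_nil] at hlen
      obtain rfl : v = x := by
        by_contra hvx
        have := hxmin v hvleaf hvx hv
        omega
      rfl
    -- after visiting `Y` the walk returns to the tree and then needs at least one more edge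
    obtain ⟨rfl : a' = Sum.inr y', hw⟩ := hw
    rcases b' with u | y''
    · have := hw.ne_nil Sum.inl_ne_inr
      have := List.length_pos_iff.mpr this
      simp only [List.length_cons]
      omega
    · exact absurd (hE' _ List.mem_cons_self).1 not_mem_gEdge_inr_inr

theorem walkDist_root_inr_eq {x : T.V} (hxleaf : T.IsLeaf x) (hxsurv : T.Survives c x)
    (hxmin : ∀ v : T.V, T.IsLeaf v → v ≠ x → T.Survives c v → T.depth x < T.depth v) (y : Y) :
    walkDist {e ∈ T.gEdge Y | ¬ T.HasColor Y c e} (Sum.inl T.root) (Sum.inr y)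
      = (T.depth x + 1 : ℕ) := by
  refine le_antisymm ?_ (le_walkDist fun l hw hE => ?_)
  · obtain ⟨l, hw, hE, hl⟩ := exists_walk_of_survives (Y := Y) hxsurv
    have hxy : (Sum.inl x, Sum.inr y) ∈ {e ∈ T.gEdge Y | ¬ T.HasColor Y c e} :=
      ⟨Or.inr ⟨x, y, hxleaf, Or.inl ⟨rfl, rfl⟩⟩, not_hasColor_inl_inr⟩
    have := walkDist_le (hw.append (show IsWalkFrom _ [(Sum.inl x, Sum.inr y)] _ from ⟨rfl, rfl⟩))
      (by simpa only [List.mem_append, List.mem_singleton, or_imp, forall_and, forall_eq]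
        using ⟨hE, hxy⟩)
    simpa [hl] using this
  · have := (depth_add_one_le_of_walk hxmin (survives_root c) hw hE).1
    rw [T.depth_root, add_zero] at this
    exact_mod_cast this

end RCTree

open RCTree in
/-- unique shortest path forcing: if `x` is the unique leaf of minimal
depth that survives the color fault `c_x` in the tree `T`, and `G` is obtained from `T`
by adding a vertex set `Y` joined to all leaves by uncolored edges, then every shortest
`root`–`y` walk in `G − c_x` ends with the edge `(x, y)`; consequently every subgraph
`H ⊆ G` with `dist_H(root, y | c_x) = dist_G(root, y | c_x)` contains the edge `(x,y)`. -/
theorem unique_shortest_path_forcing {C : Type} (T : RCTree C) (Y : Type)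
    (x : T.V) (cx : C)
    (hxleaf : T.IsLeaf x) (hxsurv : T.Survives cx x)
    (hxmin : ∀ v : T.V, T.IsLeaf v → v ≠ x → T.Survives cx v → T.depth x < T.depth v) :
    ∀ y : Y,
      (∀ l : List ((T.V ⊕ Y) × (T.V ⊕ Y)),
        IsWalkFrom (Sum.inl T.root) l (Sum.inr y) →
        (∀ e ∈ l, e ∈ T.gEdge Y ∧ ¬ T.HasColor Y cx e) →
        (l.length : ℕ∞)
          = walkDist {e ∈ T.gEdge Y | ¬ T.HasColor Y cx e} (Sum.inl T.root) (Sum.inr y) →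
        ∃ p, l = p ++ [(Sum.inl x, Sum.inr y)]) ∧
      (∀ H : Set ((T.V ⊕ Y) × (T.V ⊕ Y)), H ⊆ T.gEdge Y →
        walkDist {e ∈ H | ¬ T.HasColor Y cx e} (Sum.inl T.root) (Sum.inr y)
          = walkDist {e ∈ T.gEdge Y | ¬ T.HasColor Y cx e} (Sum.inl T.root) (Sum.inr y) →
        (Sum.inl x, Sum.inr y) ∈ H) := by
  intro y
  have hdist := walkDist_root_inr_eq hxleaf hxsurv hxmin y
  have forcing : ∀ l, IsWalkFrom (Sum.inl T.root) l (Sum.inr y) →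
      (∀ e ∈ l, e ∈ T.gEdge Y ∧ ¬ T.HasColor Y cx e) → l.length = T.depth x + 1 →
      ∃ p, l = p ++ [(Sum.inl x, Sum.inr y)] := fun l hw hE hl =>
    (depth_add_one_le_of_walk hxmin (survives_root cx) hw hE).2 (by rw [hl, T.depth_root])
  refine ⟨fun l hw hE hl => forcing l hw hE (by rw [hdist] at hl; exact_mod_cast hl),
    fun H hH hHdist => ?_⟩
  obtain ⟨l, hw, hE, hl⟩ := exists_walk_length_eq_walkDist
    (by rw [hHdist, hdist]; exact ENat.natCast_ne_top _)
  rw [hHdist, hdist, Nat.cast_inj] at hl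
  obtain ⟨p, rfl⟩ := forcing l hw (fun e he => ⟨hH (hE e he).1, (hE e he).2⟩) hl
  exact (hE _ (by simp)).1
end
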